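/- Let A, B, B' ⊆ V be subsets of a multigraph G with A, B nonempty and disjoint and B' ⊆ B, and let k ∈ ℕ. Then there exists a family 𝒴 of subsets of N(B') with |𝒴| ≤ 2^{3k} such that for every minimal (A,B)-cut (V1, V2) of cut-size at most k, the set N(B') ∩ V1 belongs to 𝒴. -/

import Mathlib

open Finset

variable {V : Type*} [Fintype V] [DecidableEq V]

/-- Cut-size of the cut `(V1, V ∖ V1)`. -/
def cutSize (w : V → V → ℕ) (V1 : Finset V) : ℕ :=
  ∑ u ∈ V1, ∑ v ∈ V1ᶜ, w u v

/-- Boundary `δ(X)`: unordered pairs `{u,v}` with `u ∈ X`, `v ∉ X`, `w u v > 0`. -/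
def bdry (w : V → V → ℕ) (X : Finset V) : Set (Sym2 V) :=
  {e | ∃ u v, e = s(u, v) ∧ u ∈ X ∧ v ∉ X ∧ 0 < w u v}

/-- `(A,B)`-cut, represented by its first part `V1` (the second part is `V1ᶜ`). -/
def IsCut (A B V1 : Finset V) : Prop := A ⊆ V1 ∧ B ⊆ V1ᶜ

/-- Minimal `(A,B)`-cut. -/
def IsMinimalCut (w : V → V → ℕ) (A B V1 : Finset V) : Prop :=
  IsCut A B V1 ∧
  (¬ ∃ V1' : Finset V, A ⊆ V1' ∧ V1' ⊂ V1 ∧ bdry w V1' ⊆ bdry w V1) ∧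
  (¬ ∃ V2' : Finset V, B ⊆ V2' ∧ V2' ⊂ V1ᶜ ∧ bdry w V2' ⊆ bdry w V1)

/-- Minimum `(A,B)`-cut. -/
def IsMinCut (w : V → V → ℕ) (A B V1 : Finset V) : Prop :=
  IsCut A B V1 ∧ ∀ U : Finset V, IsCut A B U → cutSize w V1 ≤ cutSize w U

/-- MM `(A,B)`-cut: minimum cut with `|V1|` maximum among minimum cuts. -/
def IsMMCut (w : V → V → ℕ) (A B V1 : Finset V) : Prop :=
  IsMinCut w A B V1 ∧ ∀ U : Finset V, IsMinCut w A B U → U.card ≤ V1.card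

/-- Important `(A,B)`-cut. -/
def IsImportantCut (w : V → V → ℕ) (A B V1 : Finset V) : Prop :=
  IsMinimalCut w A B V1 ∧
  ¬ ∃ X' : Finset V, IsCut A B X' ∧ V1 ⊂ X' ∧ cutSize w X' ≤ cutSize w V1

/-- Degree of a vertex. -/
def deg (w : V → V → ℕ) (v : V) : ℕ := ∑ u, w v u

/-- `deg(v; X)`: degree of `v` towards `X ∖ {v}`. -/
def degIn (w : V → V → ℕ) (v : V) (X : Finset V) : ℕ :=
  ∑ u ∈ X.erase v, w v u

/-- Neighborhood `N(X)`. -/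
def nbhd (w : V → V → ℕ) (X : Finset V) : Finset V :=
  Finset.univ.filter (fun u => u ∉ X ∧ ∃ x ∈ X, 0 < w u x)

/-- Feasible `(A,B)`-cut for the bounded-degree cut instance `(G,A,B,uA,uB,k)`. -/
def FeasibleCut (w : V → V → ℕ) (uA uB : V → ℕ) (k : ℕ) (A B VA : Finset V) : Prop :=
  IsMinimalCut w A B VA ∧ cutSize w VA ≤ k ∧
  (∀ v ∈ VA, degIn w v VA ≤ uA v) ∧ (∀ v ∈ VAᶜ, degIn w v VAᶜ ≤ uB v)

/-- Feasibility of the instance `(G,A,B,uA,uB,k)`. -/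
def Feasible (w : V → V → ℕ) (uA uB : V → ℕ) (k : ℕ) (A B : Finset V) : Prop :=
  ∃ VA : Finset V, FeasibleCut w uA uB k A B VA

/-- Unsatisfied vertices w.r.t. an upper-bound function `u` : `{v : deg(v) > u v}`. -/
def unsat (w : V → V → ℕ) (u : V → ℕ) : Finset V :=
  Finset.univ.filter (fun v => u v < deg w v)

/-- Easy instance. -/
def EasyInstance (w : V → V → ℕ) (uA uB : V → ℕ) (A B : Finset V) : Prop :=
  unsat w uA ∪ unsat w uB ⊆ A ∪ B ∧
  nbhd w (unsat w uA ∩ A) ⊆ A ∪ B ∧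
  nbhd w (unsat w uB ∩ B) ⊆ A ∪ B

/-- `A_π` for the cut `π = (V1, V1ᶜ)`. -/
def Api (w : V → V → ℕ) (uA uB : V → ℕ) (A V1 : Finset V) : Finset V :=
  A ∪ (unsat w uA ∩ V1) ∪ (unsat w uB ∩ V1) ∪
    (nbhd w (unsat w uA ∩ V1) ∩ V1) ∪ (nbhd w (unsat w uB ∩ V1ᶜ) ∩ V1)

/-- `B_π` for the cut `π = (V1, V1ᶜ)`. -/
def Bpi (w : V → V → ℕ) (uA uB : V → ℕ) (B V1 : Finset V) : Finset V :=
  B ∪ (unsat w uA ∩ V1ᶜ) ∪ (unsat w uB ∩ V1ᶜ) ∪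
    (nbhd w (unsat w uA ∩ V1) ∩ V1ᶜ) ∪ (nbhd w (unsat w uB ∩ V1ᶜ) ∩ V1ᶜ)

/-!
Every vertex of a minimal `(A,B)`-cut `V1` is reachable from `A` inside `V1`: otherwise the
reachable part would be a smaller cut whose boundary lies in `δ(V1)`. For cuts of this kind the
branching argument behind the `4^k` bound on important cuts produces at most `2^(2k)` cuts `F` of
size at most `k` such that every such `V1` of size at most `k` lies in one of them. Then
`N(B') ∩ V1 ⊆ N(B') ∩ F`, and every vertex of `N(B') ∩ F` sends an arc across the cut `F`, so
`|N(B') ∩ F| ≤ k` and each `F` accounts for at most `2^k` candidate sets.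
-/

lemma cutSize_eq_sum_ite (w : V → V → ℕ) (X : Finset V) :
    cutSize w X = ∑ u, ∑ v, if u ∈ X ∧ v ∉ X then w u v else 0 := by
  simp only [cutSize, ite_and, ← Finset.mem_compl, Finset.sum_ite_irrel, Finset.sum_const_zero,
    Finset.sum_ite_mem, Finset.univ_inter]

lemma cutSize_union_add_cutSize_inter_le (w : V → V → ℕ) (X Y : Finset V) :
    cutSize w (X ∪ Y) + cutSize w (X ∩ Y) ≤ cutSize w X + cutSize w Y := by
  simp only [cutSize_eq_sum_ite, ← Finset.sum_add_distrib]
  refine Finset.sum_le_sum fun u _ => Finset.sum_le_sum fun v _ => ?_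
  by_cases u ∈ X <;> by_cases u ∈ Y <;> by_cases v ∈ X <;> by_cases v ∈ Y <;> simp [*]

lemma le_cutSize (w : V → V → ℕ) {X : Finset V} {u v : V} (hu : u ∈ X) (hv : v ∉ X) :
    w u v ≤ cutSize w X :=
  (Finset.single_le_sum (fun _ _ => Nat.zero_le _) (Finset.mem_compl.mpr hv)).trans
    (Finset.single_le_sum (f := fun u => ∑ v ∈ Xᶜ, w u v) (fun _ _ => Nat.zero_le _) hu)

lemma exists_arc_of_cutSize_ne_zero {w : V → V → ℕ} {X : Finset V} (h : cutSize w X ≠ 0) :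
    ∃ u ∈ X, ∃ v ∉ X, 0 < w u v := by
  simpa [cutSize, Finset.sum_eq_zero_iff, Nat.pos_iff_ne_zero] using h

def removeArc {α : Type*} [DecidableEq α] (w : α → α → ℕ) (u v : α) : α → α → ℕ :=
  fun a b => if a = u ∧ b = v then w a b - 1 else w a b

lemma cutSize_le_cutSize_removeArc_add_one (w : V → V → ℕ) (u v : V) (X : Finset V) :
    cutSize w X ≤ cutSize (removeArc w u v) X + 1 := by
  simp only [cutSize, ← Finset.sum_product']
  have hpt : ∀ p : V × V,
      w p.1 p.2 ≤ removeArc w u v p.1 p.2 + if p = (u, v) then 1 else 0 := by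
    rintro ⟨a, b⟩
    simp only [removeArc, Prod.mk.injEq]
    split_ifs <;> omega
  calc ∑ p ∈ X ×ˢ Xᶜ, w p.1 p.2
      ≤ ∑ p ∈ X ×ˢ Xᶜ, (removeArc w u v p.1 p.2 + if p = (u, v) then 1 else 0) :=
        Finset.sum_le_sum fun p _ => hpt p
    _ ≤ ∑ p ∈ X ×ˢ Xᶜ, removeArc w u v p.1 p.2 + 1 := by
        rw [Finset.sum_add_distrib, Finset.sum_ite_eq']
        split_ifs <;> omega

lemma cutSize_removeArc_lt (w : V → V → ℕ) {u v : V} {X : Finset V}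
    (hu : u ∈ X) (hv : v ∉ X) (huv : 0 < w u v) :
    cutSize (removeArc w u v) X < cutSize w X := by
  simp only [cutSize, ← Finset.sum_product']
  refine Finset.sum_lt_sum (fun p _ => ?_) ⟨(u, v), by simp [hu, hv], ?_⟩
  · simp only [removeArc]
    split_ifs <;> omega
  · simp only [removeArc, and_self, if_true]
    omega

lemma IsCut.union {A B X Y : Finset V} (hX : IsCut A B X) (hY : IsCut A B Y) :
    IsCut A B (X ∪ Y) :=
  ⟨hX.1.trans Finset.subset_union_left, by
    rw [Finset.compl_union]; exact Finset.subset_inter hX.2 hY.2⟩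

lemma IsCut.inter {A B X Y : Finset V} (hX : IsCut A B X) (hY : IsCut A B Y) :
    IsCut A B (X ∩ Y) :=
  ⟨Finset.subset_inter hX.1 hY.1,
    hX.2.trans (Finset.compl_subset_compl.mpr Finset.inter_subset_left)⟩

lemma IsCut.mono_left {A A' B X : Finset V} (hAA' : A ⊆ A') (hX : IsCut A' B X) : IsCut A B X :=
  ⟨hAA'.trans hX.1, hX.2⟩

lemma exists_isMinCut (w : V → V → ℕ) {A B : Finset V} (hAB : Disjoint A B) :
    ∃ X, IsMinCut w A B X := by
  classical
  have hBc : IsCut A B Bᶜ := ⟨Finset.subset_compl_iff_disjoint_right.mpr hAB, by simp⟩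
  obtain ⟨X, hX, hmin⟩ := Finset.exists_min_image (univ.filter (IsCut A B)) (cutSize w)
    ⟨Bᶜ, by simpa using hBc⟩
  exact ⟨X, (Finset.mem_filter.mp hX).2, fun Y hY => hmin Y (by simpa using hY)⟩

lemma IsMinCut.union {w : V → V → ℕ} {A A' B X Y : Finset V} (hAA' : A ⊆ A')
    (hX : IsMinCut w A B X) (hY : IsMinCut w A' B Y) : IsMinCut w A' B (X ∪ Y) := by
  have hXY : IsCut A' B (X ∪ Y) :=
    ⟨hY.1.1.trans Finset.subset_union_right, (hX.1.union (hY.1.mono_left hAA')).2⟩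
  refine ⟨hXY, fun U hU => ?_⟩
  have := cutSize_union_add_cutSize_inter_le w X Y
  have := hX.2 _ (hX.1.inter (hY.1.mono_left hAA'))
  have := hY.2 U hU
  omega

lemma IsMMCut.subset {w : V → V → ℕ} {A B M X : Finset V} (hM : IsMMCut w A B M)
    (hX : IsMinCut w A B X) : X ⊆ M := by
  have hXM := hX.union subset_rfl hM.1
  have := Finset.eq_of_subset_of_card_le Finset.subset_union_right (hM.2 _ hXM)
  exact this ▸ Finset.subset_union_left

lemma exists_isMMCut (w : V → V → ℕ) {A B : Finset V} (hAB : Disjoint A B) :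
    ∃ M, IsMMCut w A B M := by
  classical
  obtain ⟨X, hX⟩ := exists_isMinCut w hAB
  obtain ⟨M, hM, hmax⟩ := Finset.exists_max_image (univ.filter (IsMinCut w A B)) Finset.card
    ⟨X, by simpa using hX⟩
  exact ⟨M, (Finset.mem_filter.mp hM).2, fun U hU => hmax U (by simpa using hU)⟩

lemma IsMinCut.removeArc {w : V → V → ℕ} {A B M : Finset V} {u v : V}
    (hM : IsMinCut w A B M) (hu : u ∈ M) (hv : v ∉ M) (huv : 0 < w u v) :
    IsMinCut (removeArc w u v) A B M := by
  refine ⟨hM.1, fun U hU => ?_⟩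
  have := cutSize_removeArc_lt w hu hv huv
  have := cutSize_le_cutSize_removeArc_add_one w u v U
  have := hM.2 U hU
  omega

def ReachWithin {α : Type*} (w : α → α → ℕ) (Z : Finset α) (a z : α) : Prop :=
  Relation.ReflTransGen (fun p q => p ∈ Z ∧ q ∈ Z ∧ 0 < w p q) a z

lemma ReachWithin.mono {α : Type*} {w : α → α → ℕ} {Z Z' : Finset α} (h : Z ⊆ Z') {a z : α}
    (hr : ReachWithin w Z a z) : ReachWithin w Z' a z :=
  Relation.ReflTransGen.mono (fun _ _ hpq => ⟨h hpq.1, h hpq.2.1, hpq.2.2⟩) _ _ hr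

lemma ReachWithin.removeArc {α : Type*} [DecidableEq α] {w : α → α → ℕ} {Z : Finset α}
    {u v a z : α} (hv : v ∉ Z)
    (hr : ReachWithin w Z a z) : ReachWithin (removeArc w u v) Z a z := by
  refine Relation.ReflTransGen.mono (fun p q ⟨hp, hq, hpq⟩ => ⟨hp, hq, ?_⟩) _ _ hr
  have : q ≠ v := fun h => hv (h ▸ hq)
  simpa [_root_.removeArc, this] using hpq

lemma ReachWithin.mem_of_cutSize_eq_zero {w : V → V → ℕ} {M Z : Finset V} {a z : V}
    (hM : cutSize w M = 0) (ha : a ∈ M) (hr : ReachWithin w Z a z) : z ∈ M := by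
  induction hr with
  | refl => exact ha
  | tail _ hstep ih =>
    by_contra hq
    have := le_cutSize w ih hq
    omega

lemma IsMinimalCut.reachWithin {w : V → V → ℕ} {A B V1 : Finset V}
    (hV1 : IsMinimalCut w A B V1) {z : V} (hz : z ∈ V1) : ∃ a ∈ A, ReachWithin w V1 a z := by
  classical
  set R := V1.filter fun z => ∃ a ∈ A, ReachWithin w V1 a z
  have hAR : A ⊆ R := fun a ha =>
    Finset.mem_filter.mpr ⟨hV1.1.1 ha, a, ha, Relation.ReflTransGen.refl⟩
  have hbdry : bdry w R ⊆ bdry w V1 := by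
    rintro e ⟨p, q, he, hpR, hqR, hpq⟩
    obtain ⟨hp, a, ha, hap⟩ := Finset.mem_filter.mp hpR
    have hq : q ∉ V1 := fun hq => hqR (Finset.mem_filter.mpr ⟨hq, a, ha, hap.tail ⟨hp, hq, hpq⟩⟩)
    exact ⟨p, q, he, hp, hq, hpq⟩
  have hR : R = V1 := by
    by_contra hne
    exact hV1.2.1 ⟨R, hAR, (Finset.filter_subset _ _).ssubset_of_ne hne, hbdry⟩
  rw [← hR] at hz
  exact (Finset.mem_filter.mp hz).2

def Anchored (w : V → V → ℕ) (A B Z : Finset V) : Prop :=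
  ∀ z ∈ Z, (∃ X, IsMinCut w A B X ∧ z ∈ X) ∨ ∃ a ∈ A, ReachWithin w Z a z

lemma IsMinimalCut.anchored {w : V → V → ℕ} {A B V1 : Finset V} (hV1 : IsMinimalCut w A B V1) :
    Anchored w A B V1 :=
  fun _ hz => Or.inr (hV1.reachWithin hz)

lemma Anchored.union_isMinCut {w : V → V → ℕ} {A B M Z : Finset V} (hZ : Anchored w A B Z)
    (hM : IsMinCut w A B M) : Anchored w A B (Z ∪ M) := by
  intro z hz
  rcases Finset.mem_union.mp hz with hzZ | hzM
  · exact (hZ z hzZ).imp_right fun ⟨a, ha, hr⟩ => ⟨a, ha, hr.mono Finset.subset_union_left⟩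
  · exact Or.inl ⟨M, hM, hzM⟩

lemma Anchored.mono_left {w : V → V → ℕ} {A A' B Z : Finset V} (hAA' : A ⊆ A')
    (hA'B : Disjoint A' B) (hZ : Anchored w A B Z) : Anchored w A' B Z := by
  obtain ⟨Y, hY⟩ := exists_isMinCut w hA'B
  intro z hz
  refine (hZ z hz).imp (fun ⟨X, hX, hzX⟩ => ?_) (fun ⟨a, ha, hr⟩ => ⟨a, hAA' ha, hr⟩)
  exact ⟨X ∪ Y, hX.union hAA' hY, Finset.mem_union_left _ hzX⟩

lemma Anchored.removeArc {w : V → V → ℕ} {A B M Z : Finset V} {u v : V}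
    (hM : IsMMCut w A B M) (hu : u ∈ M) (hv : v ∉ M) (huv : 0 < w u v) (hvZ : v ∉ Z)
    (hZ : Anchored w A B Z) : Anchored (removeArc w u v) A B Z := by
  intro z hz
  refine (hZ z hz).imp (fun ⟨X, hX, hzX⟩ => ?_) (fun ⟨a, ha, hr⟩ => ⟨a, ha, hr.removeArc hvZ⟩)
  exact ⟨M, hM.1.removeArc hu hv huv, hM.subset hX hzX⟩

lemma Anchored.subset_of_cutSize_eq_zero {w : V → V → ℕ} {A B M Z : Finset V}
    (hM : IsMMCut w A B M) (hM0 : cutSize w M = 0) (hZ : Anchored w A B Z) : Z ⊆ M := by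
  intro z hz
  rcases hZ z hz with ⟨X, hX, hzX⟩ | ⟨a, ha, hr⟩
  · exact hM.subset hX hzX
  · exact hr.mem_of_cutSize_eq_zero hM0 (hM.1.1.1 ha)

def CutCover (w : V → V → ℕ) (A B : Finset V) (k : ℕ) (P : Finset V → Prop)
    (ℱ : Finset (Finset V)) : Prop :=
  (∀ F ∈ ℱ, IsCut A B F ∧ cutSize w F ≤ k) ∧
    ∀ Z, IsCut A B Z → cutSize w Z ≤ k → Anchored w A B Z → P Z → ∃ F ∈ ℱ, Z ⊆ F

section CutCover

variable {w : V → V → ℕ} {A B : Finset V} {k : ℕ} {P Q : Finset V → Prop}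
  {ℱ ℱ' : Finset (Finset V)}

lemma cutCover_empty
    (h : ∀ Z, IsCut A B Z → cutSize w Z ≤ k → Anchored w A B Z → ¬ P Z) :
    CutCover w A B k P ∅ :=
  ⟨by simp, fun Z hZ hk hZa hP => absurd hP (h Z hZ hk hZa)⟩

lemma CutCover.union (h : CutCover w A B k P ℱ) (h' : CutCover w A B k Q ℱ') :
    CutCover w A B k (fun Z => P Z ∨ Q Z) (ℱ ∪ ℱ') := by
  refine ⟨fun F hF => (Finset.mem_union.mp hF).elim (h.1 F) (h'.1 F), ?_⟩
  rintro Z hZ hk hZa (hP | hQ)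
  · obtain ⟨F, hF, hZF⟩ := h.2 Z hZ hk hZa hP
    exact ⟨F, Finset.mem_union_left _ hF, hZF⟩
  · obtain ⟨F, hF, hZF⟩ := h'.2 Z hZ hk hZa hQ
    exact ⟨F, Finset.mem_union_right _ hF, hZF⟩

lemma CutCover.mono (h : CutCover w A B k P ℱ) (hQP : ∀ Z, Q Z → P Z) :
    CutCover w A B k Q ℱ :=
  ⟨h.1, fun Z hZ hk hZa hQ => h.2 Z hZ hk hZa (hQP Z hQ)⟩

lemma cutCover_singleton_of_cutSize_eq_zero {M : Finset V} (hM : IsMMCut w A B M)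
    (hM0 : cutSize w M = 0) : CutCover w A B k P {M} :=
  ⟨by simp [hM.1.1, hM0], fun _ _ _ hZa _ => ⟨M, by simp, hZa.subset_of_cutSize_eq_zero hM hM0⟩⟩

/-- Replacing `Z` by `Z ∪ M` keeps it anchored and, by submodularity, does not increase its size. -/
lemma CutCover.of_superset_isMinCut {M : Finset V} (hM : IsMinCut w A B M)
    (h : CutCover w A B k (M ⊆ ·) ℱ) : CutCover w A B k P ℱ := by
  refine ⟨h.1, fun Z hZ hk hZa _ => ?_⟩
  have hsize : cutSize w (Z ∪ M) ≤ k := by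
    have := cutSize_union_add_cutSize_inter_le w Z M
    have := hM.2 _ (hZ.inter hM.1)
    omega
  obtain ⟨F, hF, hZF⟩ :=
    h.2 (Z ∪ M) (hZ.union hM.1) hsize (hZa.union_isMinCut hM) Finset.subset_union_right
  exact ⟨F, hF, Finset.subset_union_left.trans hZF⟩

lemma CutCover.of_insert {v : V} (hvAB : Disjoint (insert v A) B)
    (h : CutCover w (insert v A) B k P ℱ) :
    CutCover w A B k (fun Z => v ∈ Z ∧ P Z) ℱ := by
  refine ⟨fun F hF => ⟨(h.1 F hF).1.mono_left (Finset.subset_insert v A), (h.1 F hF).2⟩, ?_⟩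
  rintro Z hZ hk hZa ⟨hvZ, hP⟩
  exact h.2 Z ⟨Finset.insert_subset hvZ hZ.1, hZ.2⟩ hk
    (hZa.mono_left (Finset.subset_insert v A) hvAB) hP

lemma CutCover.removeArc {M : Finset V} {u v : V} (hM : IsMMCut w A B M) (hu : u ∈ M)
    (hv : v ∉ M) (huv : 0 < w u v) (hk : 1 ≤ k)
    (h : CutCover (removeArc w u v) A B (k - 1) P ℱ) :
    CutCover w A B k (fun Z => u ∈ Z ∧ v ∉ Z ∧ P Z) ℱ := by
  refine ⟨fun F hF => ⟨(h.1 F hF).1, ?_⟩, ?_⟩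
  · have := cutSize_le_cutSize_removeArc_add_one w u v F
    have := (h.1 F hF).2
    omega
  rintro Z hZ hZk hZa ⟨huZ, hvZ, hP⟩
  have := cutSize_removeArc_lt w huZ hvZ huv
  exact h.2 Z hZ (by omega) (hZa.removeArc hM hu hv huv hvZ) hP

lemma exists_cutCover_card_le_one {M : Finset V} (hM : IsMMCut w A B M)
    (hM0k : cutSize w M = 0 ∨ k < cutSize w M) :
    ∃ ℱ : Finset (Finset V), ℱ.card ≤ 1 ∧ CutCover w A B k P ℱ := by
  rcases hM0k with hM0 | hkM
  · exact ⟨{M}, by simp, cutCover_singleton_of_cutSize_eq_zero hM hM0⟩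
  · exact ⟨∅, by simp, cutCover_empty fun Z hZ hk _ _ => by have := hM.1.2 Z hZ; omega⟩

lemma cutSize_lt_of_isCut_insert {M X : Finset V} {v : V} (hM : IsMMCut w A B M) (hv : v ∉ M)
    (hX : IsCut (insert v A) B X) : cutSize w M < cutSize w X := by
  by_contra! hle
  have hXmin : IsMinCut w A B X :=
    ⟨hX.mono_left (Finset.subset_insert v A), fun Y hY => hle.trans (hM.1.2 Y hY)⟩
  exact hv (hM.subset hXmin (hX.1 (Finset.mem_insert_self v A)))

end CutCover

/-- Branching on an arc `(u, v)` leaving the largest minimum cut `M`: either `v` joins the source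
side, which raises the minimum cut value, or the arc is deleted, which lowers both `k` and the
minimum cut value by one. Either way `2k - λ(A,B)` drops, so it bounds the depth of the recursion. -/
theorem exists_cutCover_of_le_add_cutSize (m : ℕ) :
    ∀ (w : V → V → ℕ) (A B : Finset V) (k : ℕ), Disjoint A B →
      (∀ X, IsCut A B X → 2 * k ≤ m + cutSize w X) →
      ∃ ℱ : Finset (Finset V), ℱ.card ≤ 2 ^ m ∧ CutCover w A B k (fun _ => True) ℱ := by
  induction m with
  | zero =>
    intro w A B k hAB hbudget
    obtain ⟨M, hM⟩ := exists_isMMCut w hAB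
    have := hbudget M hM.1.1
    exact exists_cutCover_card_le_one hM (by omega)
  | succ m ih =>
    intro w A B k hAB hbudget
    obtain ⟨M, hM⟩ := exists_isMMCut w hAB
    by_cases hM0k : cutSize w M = 0 ∨ k < cutSize w M
    · obtain ⟨ℱ, hcard, hcover⟩ := exists_cutCover_card_le_one hM hM0k
      exact ⟨ℱ, hcard.trans Nat.one_le_two_pow, hcover⟩
    obtain ⟨hM0, hkM⟩ : cutSize w M ≠ 0 ∧ cutSize w M ≤ k := by omega
    obtain ⟨u, hu, v, hv, huv⟩ := exists_arc_of_cutSize_ne_zero hM0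
    have h₁ : ∃ ℱ₁ : Finset (Finset V), ℱ₁.card ≤ 2 ^ m ∧
        CutCover w A B k (fun Z => v ∈ Z ∧ True) ℱ₁ := by
      by_cases hvB : v ∈ B
      · exact ⟨∅, by simp, cutCover_empty fun Z hZ _ _ ⟨hvZ, _⟩ =>
          Finset.mem_compl.mp (hZ.2 hvB) hvZ⟩
      have hvAB : Disjoint (insert v A) B := Finset.disjoint_insert_left.mpr ⟨hvB, hAB⟩
      obtain ⟨ℱ₁, hcard, hcover⟩ := ih w (insert v A) B k hvAB fun X hX => by
        have := cutSize_lt_of_isCut_insert hM hv hX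
        have := hbudget M hM.1.1
        omega
      exact ⟨ℱ₁, hcard, hcover.of_insert hvAB⟩
    have h₂ : ∃ ℱ₂ : Finset (Finset V), ℱ₂.card ≤ 2 ^ m ∧
        CutCover w A B k (fun Z => u ∈ Z ∧ v ∉ Z ∧ True) ℱ₂ := by
      obtain ⟨ℱ₂, hcard, hcover⟩ := ih (removeArc w u v) A B (k - 1) hAB fun X hX => by
        have := cutSize_le_cutSize_removeArc_add_one w u v X
        have := hbudget X hX
        omega
      exact ⟨ℱ₂, hcard, hcover.removeArc hM hu hv huv (by omega)⟩
    obtain ⟨ℱ₁, hcard₁, hcover₁⟩ := h₁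
    obtain ⟨ℱ₂, hcard₂, hcover₂⟩ := h₂
    refine ⟨ℱ₁ ∪ ℱ₂, (Finset.card_union_le _ _).trans (by omega), ?_⟩
    refine ((hcover₁.union hcover₂).mono fun Z hMZ => ?_).of_superset_isMinCut hM.1
    by_cases hvZ : v ∈ Z
    · exact Or.inl ⟨hvZ, trivial⟩
    · exact Or.inr ⟨hMZ hu, hvZ, trivial⟩

lemma card_nbhd_inter_le_cutSize (w : V → V → ℕ) {B' F : Finset V} (hB' : B' ⊆ Fᶜ) :
    (nbhd w B' ∩ F).card ≤ cutSize w F := by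
  rw [Finset.card_eq_sum_ones]
  calc ∑ _ ∈ nbhd w B' ∩ F, 1
      ≤ ∑ y ∈ nbhd w B' ∩ F, ∑ v ∈ Fᶜ, w y v := Finset.sum_le_sum fun y hy => by
        obtain ⟨-, -, x, hx, hyx⟩ := Finset.mem_filter.mp (Finset.mem_inter.mp hy).1
        exact hyx.trans_le (Finset.single_le_sum (fun _ _ => Nat.zero_le _) (hB' hx))
    _ ≤ cutSize w F := Finset.sum_le_sum_of_subset Finset.inter_subset_right

theorem candidate_sets_two_general (w : V → V → ℕ)
    (A B B' : Finset V)
    (hAB : Disjoint A B) (hB' : B' ⊆ B) (k : ℕ) :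
    ∃ 𝒴 : Finset (Finset V), 𝒴.card ≤ 2 ^ (3 * k) ∧ (∀ Y ∈ 𝒴, Y ⊆ nbhd w B') ∧
      ∀ V1 : Finset V, IsMinimalCut w A B V1 → cutSize w V1 ≤ k →
        nbhd w B' ∩ V1 ∈ 𝒴 := by
  obtain ⟨ℱ, hcard, hℱ, hcover⟩ :=
    exists_cutCover_of_le_add_cutSize (2 * k) w A B k hAB fun _ _ => by omega
  refine ⟨ℱ.biUnion fun F => (nbhd w B' ∩ F).powerset, ?_, ?_, ?_⟩
  · have hsmall : ∀ F ∈ ℱ, (nbhd w B' ∩ F).powerset.card ≤ 2 ^ k := fun F hF => by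
      rw [Finset.card_powerset]
      exact Nat.pow_le_pow_right two_pos
        ((card_nbhd_inter_le_cutSize w (hB'.trans (hℱ F hF).1.2)).trans (hℱ F hF).2)
    calc _ ≤ ℱ.card * 2 ^ k := Finset.card_biUnion_le_card_mul _ _ _ hsmall
      _ ≤ 2 ^ (2 * k) * 2 ^ k := Nat.mul_le_mul_right _ hcard
      _ = 2 ^ (3 * k) := by rw [← pow_add]; ring_nf
  · intro Y hY
    obtain ⟨F, -, hYF⟩ := Finset.mem_biUnion.mp hY
    exact (Finset.mem_powerset.mp hYF).trans Finset.inter_subset_left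
  · intro V1 hV1 hk
    obtain ⟨F, hF, hV1F⟩ := hcover V1 hV1.1 hk hV1.anchored trivial
    exact Finset.mem_biUnion.mpr
      ⟨F, hF, Finset.mem_powerset.mpr (Finset.inter_subset_inter subset_rfl hV1F)⟩

/-- candidate sets for `N(B') ∩ V1` over minimal `(A,B)`-cuts of size `≤ k`. -/
theorem candidate_sets_two (w : V → V → ℕ)
    (hsymm : ∀ u v, w u v = w v u) (hloop : ∀ v, w v v = 0)
    (A B B' : Finset V) (hA : A.Nonempty) (hB : B.Nonempty)
    (hAB : Disjoint A B) (hB' : B' ⊆ B) (k : ℕ) :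
    ∃ 𝒴 : Finset (Finset V), 𝒴.card ≤ 2 ^ (3 * k) ∧ (∀ Y ∈ 𝒴, Y ⊆ nbhd w B') ∧
      ∀ V1 : Finset V, IsMinimalCut w A B V1 → cutSize w V1 ≤ k →
        nbhd w B' ∩ V1 ∈ 𝒴 :=
  candidate_sets_two_general w A B B' hAB hB' k
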